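/- Let D be an integral domain whose tensor square Int(D) ⊗_D Int(D) embeds into Int(D²) as the subring Int_⊗(D²) of sums of products g(X)h(Y) with g,h ∈ Int(D). If Int_⊗(Dⁿ) is a WPC extension of D for some integer n > 1, then Int_⊗(D²) is a WPC extension of D. -/

import Mathlib

set_option linter.unusedSectionVars false
open Polynomial TensorProduct

variable (D K : Type*) [CommRing D] [IsDomain D] [Field K] [Algebra D K] [IsFractionRing D K]

/-- The ring of integer-valued polynomials `Int(D) ⊆ K[X]`. -/
noncomputable def IntD : Subalgebra D (Polynomial K) :=
  ⨅ a : D, Subalgebra.comap ((Polynomial.aeval (algebraMap D K a)).restrictScalars D)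
    (Algebra.ofId D K).range

theorem mem_IntD {f : Polynomial K} :
    f ∈ IntD D K ↔
      ∀ a : D, ∃ d : D, algebraMap D K d = Polynomial.eval (algebraMap D K a) f := by
  simp [IntD, Algebra.mem_iInf, Subalgebra.mem_comap, Algebra.ofId_apply, Algebra.mem_bot,
    Set.mem_range]

/-- `X` as an element of `Int(D)`. -/
noncomputable def Xint : IntD D K := ⟨Polynomial.X, (mem_IntD D K).mpr fun a => ⟨a, by simp⟩⟩

/-- The set of products `f₁(X₁)⋯fₙ(Xₙ)` with each `fᵢ ∈ Int(D)`. -/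
def prodTensorSet (n : ℕ) : Set (MvPolynomial (Fin n) K) :=
  {p | ∃ g : Fin n → Polynomial K, (∀ i, g i ∈ IntD D K) ∧
    p = ∏ i, Polynomial.aeval (MvPolynomial.X i) (g i)}

/-- `Int_⊗(Dⁿ)`: the sums of products `f₁(X₁)⋯fₙ(Xₙ)` with each `fᵢ ∈ Int(D)`,
i.e. the image of the canonical map `Int(D)^{⊗n} → Int(Dⁿ)`. -/
noncomputable def IntOtimes (n : ℕ) : Submodule D (MvPolynomial (Fin n) K) :=
  Submodule.span D (prodTensorSet D K n)

/-- A subset `S` of `K[X₁,…,Xₙ]` is a WPC extension of `D` if `g(S) ⊆ S` for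
all `g ∈ Int(D)`. -/
def WPCset (n : ℕ) (S : Set (MvPolynomial (Fin n) K)) : Prop :=
  ∀ g ∈ IntD D K, ∀ a ∈ S, Polynomial.aeval a g ∈ S

/-- The canonical map `θ₂ : Int(D) ⊗_D Int(D) → Int(D²) ⊆ K[X,Y]`. -/
noncomputable def theta2 : (IntD D K) ⊗[D] (IntD D K) →ₐ[D] MvPolynomial (Fin 2) K :=
  Algebra.TensorProduct.productMap
    (((Polynomial.aeval (MvPolynomial.X 0)).restrictScalars D).comp (IntD D K).val)
    (((Polynomial.aeval (MvPolynomial.X 1)).restrictScalars D).comp (IntD D K).val)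

/-! For an injection `f : Fin m → Fin n`, renaming the variables along `f` and then sending the
variables outside the image of `f` to `0` is the identity of `K[X₁,…,Xₘ]`. Both maps are
`K`-algebra maps, so they commute with substitution into `g ∈ Int(D)`, and both preserve `Int_⊗`:
the first pads a product `f₁(X₁)⋯fₘ(Xₘ)` with factors `1`, the second turns the surplus factors
into constants `fⱼ(0) ∈ D`. Hence `Int_⊗(Dᵐ)` is a retract of `Int_⊗(Dⁿ)` and inherits the WPC
property. -/

open Function

variable {D K}

theorem aeval_zero_mem_bot_of_mem_IntD {A : Type*} [CommRing A] [Algebra K A] [Algebra D A]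
    [IsScalarTower D K A] {g : K[X]} (hg : g ∈ IntD D K) :
    Polynomial.aeval (0 : A) g ∈ (⊥ : Subalgebra D A) := by
  obtain ⟨d, hd⟩ := (mem_IntD D K).mp hg 0
  rw [map_zero] at hd
  refine Algebra.mem_bot.mpr ⟨d, ?_⟩
  rw [← Polynomial.coeff_zero_eq_aeval_zero', Polynomial.coeff_zero_eq_eval_zero, ← hd,
    ← IsScalarTower.algebraMap_apply]

variable {m n : ℕ} {f : Fin m → Fin n}

theorem rename_mem_IntOtimes (hf : Injective f) {p : MvPolynomial (Fin m) K}
    (hp : p ∈ IntOtimes D K m) : MvPolynomial.rename f p ∈ IntOtimes D K n := by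
  suffices IntOtimes D K m ≤ (IntOtimes D K n).comap
      ((MvPolynomial.rename f).toLinearMap.restrictScalars D) from this hp
  refine Submodule.span_le.mpr fun q ⟨g, hg, hq⟩ => Submodule.subset_span ?_
  have hg' : ∀ j, extend f g 1 j ∈ IntD D K := fun j => by
    rw [extend_def]
    split_ifs
    exacts [hg _, one_mem _]
  refine ⟨extend f g 1, hg', ?_⟩
  simp only [hq, LinearMap.coe_restrictScalars, AlgHom.toLinearMap_apply, map_prod,
    ← Polynomial.aeval_algHom_apply, MvPolynomial.rename_X]
  refine Fintype.prod_of_injective f hf _ _ (fun j hj => ?_) (fun i => by rw [hf.extend_apply])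
  rw [extend_apply' _ _ _ hj, Pi.one_apply, map_one]

theorem aeval_extend_rename (hf : Injective f) (p : MvPolynomial (Fin m) K) :
    MvPolynomial.aeval (extend f MvPolynomial.X 0) (MvPolynomial.rename f p) = p := by
  rw [MvPolynomial.aeval_rename, extend_comp hf, MvPolynomial.aeval_X_left_apply]

theorem aeval_extend_mem_IntOtimes (hf : Injective f) {p : MvPolynomial (Fin n) K}
    (hp : p ∈ IntOtimes D K n) :
    MvPolynomial.aeval (extend f MvPolynomial.X 0) p ∈ IntOtimes D K m := by
  classical
  suffices IntOtimes D K n ≤ (IntOtimes D K m).comap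
      ((MvPolynomial.aeval (extend f MvPolynomial.X 0)).toLinearMap.restrictScalars D) from this hp
  refine Submodule.span_le.mpr fun q ⟨g, hg, hq⟩ => ?_
  simp only [hq, SetLike.mem_coe, Submodule.mem_comap, LinearMap.coe_restrictScalars,
    AlgHom.toLinearMap_apply, map_prod, ← Polynomial.aeval_algHom_apply, MvPolynomial.aeval_X]
  rw [← Finset.prod_filter_mul_prod_filter_not Finset.univ (· ∈ Set.range f)]
  have h_range : ∏ j ∈ Finset.univ.filter (· ∈ Set.range f),
      Polynomial.aeval (extend f (MvPolynomial.X (R := K)) 0 j) (g j) =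
      ∏ i, Polynomial.aeval (MvPolynomial.X i) (g (f i)) := by
    rw [Finset.prod_filter]
    refine (Fintype.prod_of_injective f hf _ _ (fun j hj => if_neg hj) fun i => ?_).symm
    rw [if_pos ⟨i, rfl⟩, hf.extend_apply]
  have h_compl : ∏ j ∈ Finset.univ.filter (· ∉ Set.range f),
      Polynomial.aeval (extend f (MvPolynomial.X (R := K)) 0 j) (g j) ∈ (⊥ : Subalgebra D _) :=
    prod_mem fun j hj => by
      rw [extend_apply' _ _ _ (Finset.mem_filter.mp hj).2]
      exact aeval_zero_mem_bot_of_mem_IntD (hg j)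
  obtain ⟨d, hd⟩ := Algebra.mem_bot.mp h_compl
  rw [h_range, ← hd, mul_comm, ← Algebra.smul_def]
  exact Submodule.smul_mem _ d (Submodule.subset_span ⟨_, fun i => hg (f i), rfl⟩)

theorem WPCset.IntOtimes_of_injective (hf : Injective f) (h : WPCset D K n (IntOtimes D K n)) :
    WPCset D K m (IntOtimes D K m) := by
  intro g hg p hp
  have := aeval_extend_mem_IntOtimes hf (h g hg _ (rename_mem_IntOtimes hf hp))
  rwa [← Polynomial.aeval_algHom_apply, aeval_extend_rename hf] at this

theorem stmt_5
    (n : ℕ) (hn : 1 < n) (h : WPCset D K n (IntOtimes D K n)) :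
    WPCset D K 2 (IntOtimes D K 2) :=
  h.IntOtimes_of_injective (Fin.castLE_injective hn)
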